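/- arXiv:2605.27079 — 3 statements merged into one kernel-verified Lean document; each statement's English description precedes it below -/
import Mathlib

section
/- Let π_Q and π_{Q̃} be the exponentially tilted probability densities obtained from π_base via Q and Q̃ respectively, with inverse temperature β > 0, where ‖Q − Q̃‖_∞ ≤ ε. Then the Kullback–Leibler divergence satisfies D_KL(π_Q ‖ π_{Q̃}) = ∫ π_Q(a) log(π_Q(a)/π_{Q̃}(a)) dμ(a) ≤ 2βε. -/
open MeasureTheory Real

/-! Wherever `πb > 0`, the likelihood ratio is `πQ / πQ' = exp (β (Q - Q')) · ZQ' / ZQ`.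
The first factor is at most `exp (β ε)` pointwise, and so is the second, since
`ZQ' ≤ exp (β ε) ZQ` by comparing the integrands. Hence `log (πQ / πQ') ≤ 2 β ε` almost
everywhere, and integrating against the probability density `πQ` gives the bound. -/

section

variable {α : Type*} [MeasurableSpace α] {μ : Measure α}

/-- Only the dominating function needs to be integrable: otherwise `∫ f ∂μ = 0`. -/
theorem integral_le_integral_of_ae_le {f g : α → ℝ} (hg : Integrable g μ) (hfg : f ≤ᵐ[μ] g)
    (hg_nonneg : 0 ≤ ∫ a, g a ∂μ) : ∫ a, f a ∂μ ≤ ∫ a, g a ∂μ := by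
  by_cases hf : Integrable f μ
  · exact integral_mono_ae hf hg hfg
  · rwa [integral_undef hf]

theorem integral_mul_exp_le_exp_mul_integral {w Q Q' : α → ℝ} {β ε : ℝ} (hβ : 0 ≤ β)
    (hw : 0 ≤ᵐ[μ] w) (hQ'_le : ∀ a, Q' a - Q a ≤ ε)
    (hint : Integrable (fun a => w a * exp (β * Q a)) μ) :
    ∫ a, w a * exp (β * Q' a) ∂μ ≤ exp (β * ε) * ∫ a, w a * exp (β * Q a) ∂μ := by
  have hnonneg : 0 ≤ ∫ a, exp (β * ε) * (w a * exp (β * Q a)) ∂μ := by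
    refine integral_nonneg_of_ae ?_
    filter_upwards [hw] with a ha
    exact mul_nonneg (exp_pos _).le (mul_nonneg ha (exp_pos _).le)
  rw [← integral_const_mul]
  refine integral_le_integral_of_ae_le (hint.const_mul _) ?_ hnonneg
  filter_upwards [hw] with a ha
  calc w a * exp (β * Q' a) ≤ w a * exp (β * Q a + β * ε) := by
        gcongr
        nlinarith [hQ'_le a]
    _ = exp (β * ε) * (w a * exp (β * Q a)) := by rw [exp_add]; ring

end

theorem log_div_tilted {w q q' β Z Z' : ℝ} (hw : 0 < w) (hZ : 0 < Z) (hZ' : 0 < Z') :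
    log ((w * exp (β * q) / Z) / (w * exp (β * q') / Z')) = β * (q - q') + log (Z' / Z) := by
  have hratio : (w * exp (β * q) / Z) / (w * exp (β * q') / Z') =
      exp (β * (q - q')) * (Z' / Z) := by
    rw [mul_sub, exp_sub]
    field_simp
  rw [hratio, log_mul (exp_ne_zero _) (by positivity), log_exp]

theorem stmt_0_general {α : Type*} [MeasurableSpace α] (μ : Measure α)
    (πb Q Q' : α → ℝ) (β ε : ℝ) (hβ : 0 < β) (hε : 0 ≤ ε)
    (hπb_pos : ∀ᵐ a ∂μ, 0 < πb a)
    (hdiff : ∀ a, |Q a - Q' a| ≤ ε)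
    (ZQ ZQ' : ℝ)
    (hZQ : ZQ = ∫ a, πb a * exp (β * Q a) ∂μ)
    (hZQ' : ZQ' = ∫ a, πb a * exp (β * Q' a) ∂μ)
    (hZQ_int : Integrable (fun a => πb a * exp (β * Q a)) μ)
    (hZQ_pos : 0 < ZQ) (hZQ'_pos : 0 < ZQ')
    (πQ πQ' : α → ℝ)
    (hπQ : ∀ a, πQ a = πb a * exp (β * Q a) / ZQ)
    (hπQ' : ∀ a, πQ' a = πb a * exp (β * Q' a) / ZQ') :
    ∫ a, πQ a * Real.log (πQ a / πQ' a) ∂μ ≤ 2 * β * ε := by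
  obtain rfl : πQ = fun a => πb a * exp (β * Q a) / ZQ := funext hπQ
  obtain rfl : πQ' = fun a => πb a * exp (β * Q' a) / ZQ' := funext hπQ'
  have hZ : log (ZQ' / ZQ) ≤ β * ε := by
    have hle : ZQ' ≤ exp (β * ε) * ZQ := hZQ' ▸ hZQ ▸
      integral_mul_exp_le_exp_mul_integral hβ.le (hπb_pos.mono fun _ h => h.le)
        (fun a => by linarith [(abs_le.mp (hdiff a)).1]) hZQ_int
    rw [log_le_iff_le_exp (by positivity), div_le_iff₀ hZQ_pos]
    exact hle
  have hmass : ∫ a, πb a * exp (β * Q a) / ZQ ∂μ = 1 := by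
    rw [integral_div, ← hZQ, div_self hZQ_pos.ne']
  calc ∫ a, πb a * exp (β * Q a) / ZQ *
          log ((πb a * exp (β * Q a) / ZQ) / (πb a * exp (β * Q' a) / ZQ')) ∂μ
      ≤ ∫ a, πb a * exp (β * Q a) / ZQ * (2 * β * ε) ∂μ := by
        refine integral_le_integral_of_ae_le (hZQ_int.div_const ZQ |>.mul_const _) ?_
          (by rw [integral_mul_const, hmass]; positivity)
        filter_upwards [hπb_pos] with a ha
        rw [log_div_tilted ha hZQ_pos hZQ'_pos]
        gcongr
        nlinarith [(abs_le.mp (hdiff a)).2]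
    _ = 2 * β * ε := by rw [integral_mul_const, hmass, one_mul]

/-- Let `πQ` and `πQ'` be the exponentially tilted probability densities
obtained from `πb` via `Q` and `Q'` respectively, with inverse temperature `β > 0`, where
`‖Q − Q'‖_∞ ≤ ε`.  Then the Kullback–Leibler divergence satisfies
`D_KL(πQ ‖ πQ') = ∫ πQ(a) log(πQ(a)/πQ'(a)) dμ(a) ≤ 2βε`. -/
theorem stmt_0 {α : Type*} [MeasurableSpace α] (μ : Measure α) [SigmaFinite μ]
    (πb Q Q' : α → ℝ) (β ε : ℝ) (hβ : 0 < β) (hε : 0 ≤ ε)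
    (hπb_meas : Measurable πb) (hπb_pos : ∀ᵐ a ∂μ, 0 < πb a)
    (hπb_prob : ∫ a, πb a ∂μ = 1)
    (hQ_meas : Measurable Q) (hQ'_meas : Measurable Q')
    (hQ_bdd : ∃ C, ∀ a, |Q a| ≤ C) (hQ'_bdd : ∃ C, ∀ a, |Q' a| ≤ C)
    (hdiff : ∀ a, |Q a - Q' a| ≤ ε)
    (ZQ ZQ' : ℝ)
    (hZQ : ZQ = ∫ a, πb a * exp (β * Q a) ∂μ)
    (hZQ' : ZQ' = ∫ a, πb a * exp (β * Q' a) ∂μ)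
    (hZQ_int : Integrable (fun a => πb a * exp (β * Q a)) μ)
    (hZQ'_int : Integrable (fun a => πb a * exp (β * Q' a)) μ)
    (hZQ_pos : 0 < ZQ) (hZQ'_pos : 0 < ZQ')
    (πQ πQ' : α → ℝ)
    (hπQ : ∀ a, πQ a = πb a * exp (β * Q a) / ZQ)
    (hπQ' : ∀ a, πQ' a = πb a * exp (β * Q' a) / ZQ') :
    ∫ a, πQ a * Real.log (πQ a / πQ' a) ∂μ ≤ 2 * β * ε :=
  stmt_0_general μ πb Q Q' β ε hβ hε hπb_pos hdiff ZQ ZQ' hZQ hZQ' hZQ_int hZQ_pos hZQ'_pos πQ πQ'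
    hπQ hπQ'
end

section
/- Let π_Q and π_{Q̃} be the exponentially tilted probability densities obtained from π_base via Q and Q̃ respectively, with inverse temperature β > 0, where ‖Q − Q̃‖_∞ ≤ ε. Then the total variation distance satisfies TV(π_Q, π_{Q̃}) = (1/2) ∫ |π_Q(a) − π_{Q̃}(a)| dμ(a) ≤ (1/2)(e^{2βε} − 1). -/
open MeasureTheory Real

/-- Under the same hypotheses, the total variation distance satisfies
`TV(πQ, πQ') = (1/2) ∫ |πQ(a) − πQ'(a)| dμ(a) ≤ (1/2)(e^{2βε} − 1)`. -/
theorem stmt_1 {α : Type*} [MeasurableSpace α] (μ : Measure α) [SigmaFinite μ]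
    (πb Q Q' : α → ℝ) (β ε : ℝ) (hβ : 0 < β) (hε : 0 ≤ ε)
    (hπb_meas : Measurable πb) (hπb_pos : ∀ᵐ a ∂μ, 0 < πb a)
    (hπb_prob : ∫ a, πb a ∂μ = 1)
    (hQ_meas : Measurable Q) (hQ'_meas : Measurable Q')
    (hQ_bdd : ∃ C, ∀ a, |Q a| ≤ C) (hQ'_bdd : ∃ C, ∀ a, |Q' a| ≤ C)
    (hdiff : ∀ a, |Q a - Q' a| ≤ ε)
    (ZQ ZQ' : ℝ)
    (hZQ : ZQ = ∫ a, πb a * exp (β * Q a) ∂μ)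
    (hZQ' : ZQ' = ∫ a, πb a * exp (β * Q' a) ∂μ)
    (hZQ_int : Integrable (fun a => πb a * exp (β * Q a)) μ)
    (hZQ'_int : Integrable (fun a => πb a * exp (β * Q' a)) μ)
    (hZQ_pos : 0 < ZQ) (hZQ'_pos : 0 < ZQ')
    (πQ πQ' : α → ℝ)
    (hπQ : ∀ a, πQ a = πb a * exp (β * Q a) / ZQ)
    (hπQ' : ∀ a, πQ' a = πb a * exp (β * Q' a) / ZQ') :
    (1 / 2) * ∫ a, |πQ a - πQ' a| ∂μ ≤ (1 / 2) * (exp (2 * β * ε) - 1) := by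
  have hKpos : (0:ℝ) < exp (β * ε) := exp_pos _
  have hK1 : (1:ℝ) ≤ exp (β * ε) := by
    rw [← Real.exp_zero]; exact exp_le_exp.mpr (by positivity)
  have hKK : exp (β * ε) * exp (β * ε) = exp (2 * β * ε) := by
    rw [← Real.exp_add]; ring_nf
  have hc1 : (1:ℝ) ≤ exp (2 * β * ε) := by nlinarith
  -- pointwise comparison of exponentials
  have hEgen : ∀ (R R' : α → ℝ), (∀ a, |R a - R' a| ≤ ε) → ∀ a,
      exp (β * R a) ≤ exp (β * ε) * exp (β * R' a) := by
    intro R R' hd a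
    rw [← Real.exp_add]
    apply exp_le_exp.mpr
    have := (abs_le.mp (hd a)).2
    nlinarith
  -- comparison of normalizers
  have key : ∀ (R R' : α → ℝ), (∀ a, |R a - R' a| ≤ ε) →
      Integrable (fun a => πb a * exp (β * R a)) μ →
      Integrable (fun a => πb a * exp (β * R' a)) μ →
      (∫ a, πb a * exp (β * R a) ∂μ) ≤ exp (β * ε) * ∫ a, πb a * exp (β * R' a) ∂μ := by
    intro R R' hd hi hi'
    rw [← integral_const_mul]
    refine integral_mono_ae hi (hi'.const_mul _) ?_
    filter_upwards [hπb_pos] with a hpa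
    calc πb a * exp (β * R a) ≤ πb a * (exp (β * ε) * exp (β * R' a)) :=
          mul_le_mul_of_nonneg_left (hEgen R R' hd a) hpa.le
      _ = exp (β * ε) * (πb a * exp (β * R' a)) := by ring
  have hdiff' : ∀ a, |Q' a - Q a| ≤ ε := fun a => by rw [abs_sub_comm]; exact hdiff a
  have hZ1 : ZQ ≤ exp (β * ε) * ZQ' := by
    rw [hZQ, hZQ']; exact key Q Q' hdiff hZQ_int hZQ'_int
  have hZ2 : ZQ' ≤ exp (β * ε) * ZQ := by
    rw [hZQ, hZQ']; exact key Q' Q hdiff' hZQ'_int hZQ_int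
  have hπQ_int : Integrable πQ μ :=
    (hZQ_int.div_const ZQ).congr (ae_of_all _ fun a => (hπQ a).symm)
  have hπQ'_int : Integrable πQ' μ :=
    (hZQ'_int.div_const ZQ').congr (ae_of_all _ fun a => (hπQ' a).symm)
  have hint1 : ∫ a, πQ' a ∂μ = 1 := by
    simp only [hπQ', integral_div, ← hZQ']
    exact div_self hZQ'_pos.ne'
  have hbound : ∀ᵐ a ∂μ, |πQ a - πQ' a| ≤ (exp (2 * β * ε) - 1) * πQ' a := by
    filter_upwards [hπb_pos] with a hpa
    have hq0 : 0 ≤ πQ a := by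
      rw [hπQ]; exact div_nonneg (mul_nonneg hpa.le (exp_pos _).le) hZQ_pos.le
    have hq0' : 0 ≤ πQ' a := by
      rw [hπQ']; exact div_nonneg (mul_nonneg hpa.le (exp_pos _).le) hZQ'_pos.le
    have hPP' : πb a * exp (β * Q a) ≤ exp (β * ε) * (πb a * exp (β * Q' a)) := by
      calc πb a * exp (β * Q a) ≤ πb a * (exp (β * ε) * exp (β * Q' a)) :=
            mul_le_mul_of_nonneg_left (hEgen Q Q' hdiff a) hpa.le
        _ = _ := by ring
    have hP'P : πb a * exp (β * Q' a) ≤ exp (β * ε) * (πb a * exp (β * Q a)) := by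
      calc πb a * exp (β * Q' a) ≤ πb a * (exp (β * ε) * exp (β * Q a)) :=
            mul_le_mul_of_nonneg_left (hEgen Q' Q hdiff' a) hpa.le
        _ = _ := by ring
    have hpe : 0 ≤ πb a * exp (β * Q a) := mul_nonneg hpa.le (exp_pos _).le
    have hpe' : 0 ≤ πb a * exp (β * Q' a) := mul_nonneg hpa.le (exp_pos _).le
    have h1 : πQ a ≤ exp (2 * β * ε) * πQ' a := by
      rw [hπQ, hπQ', mul_div_assoc', div_le_div_iff₀ hZQ_pos hZQ'_pos]
      calc πb a * exp (β * Q a) * ZQ'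
          ≤ (exp (β * ε) * (πb a * exp (β * Q' a))) * (exp (β * ε) * ZQ) :=
            mul_le_mul hPP' hZ2 hZQ'_pos.le (mul_nonneg hKpos.le hpe')
        _ = exp (β * ε) * exp (β * ε) * (πb a * exp (β * Q' a)) * ZQ := by ring
        _ = exp (2 * β * ε) * (πb a * exp (β * Q' a)) * ZQ := by rw [hKK]
    have h2 : πQ' a ≤ exp (2 * β * ε) * πQ a := by
      rw [hπQ, hπQ', mul_div_assoc', div_le_div_iff₀ hZQ'_pos hZQ_pos]
      calc πb a * exp (β * Q' a) * ZQ
          ≤ (exp (β * ε) * (πb a * exp (β * Q a))) * (exp (β * ε) * ZQ') :=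
            mul_le_mul hP'P hZ1 hZQ_pos.le (mul_nonneg hKpos.le hpe)
        _ = exp (β * ε) * exp (β * ε) * (πb a * exp (β * Q a)) * ZQ' := by ring
        _ = exp (2 * β * ε) * (πb a * exp (β * Q a)) * ZQ' := by rw [hKK]
    rcases le_total (πQ a) (πQ' a) with h | h
    · rw [abs_of_nonpos (by linarith)]
      nlinarith
    · rw [abs_of_nonneg (by linarith)]
      linarith
  have hmain : ∫ a, |πQ a - πQ' a| ∂μ ≤ exp (2 * β * ε) - 1 := by
    calc ∫ a, |πQ a - πQ' a| ∂μ ≤ ∫ a, (exp (2 * β * ε) - 1) * πQ' a ∂μ :=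
          integral_mono_ae (hπQ_int.sub hπQ'_int).abs (hπQ'_int.const_mul _) hbound
      _ = (exp (2 * β * ε) - 1) * 1 := by rw [integral_const_mul, hint1]
      _ = exp (2 * β * ε) - 1 := mul_one _
  linarith
end

section
/- Under the hypotheses ‖Q − Q̃‖_∞ ≤ ε and β > 0, the pointwise difference of the exponentially tilted densities satisfies |π_Q(a) − π_{Q̃}(a)| ≤ (e^{2βε} − 1) π_{Q̃}(a) for μ-almost every a. -/
open MeasureTheory Real

/-!
Dividing out the base density, `πQ a / πQ' a = exp (β (Q a - Q' a)) · ZQ' / ZQ`. Both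
factors have logarithm of size at most `βε`: the first pointwise, the second because
integrating the pointwise bound `exp (β Q) ≤ exp (βε) exp (β Q')` against `πb` compares the
partition functions. So the log-ratio of the two densities is at most `2βε` in absolute
value, and `|r - 1| ≤ exp |log r| - 1` finishes the argument.
-/

lemma abs_sub_le_exp_sub_one_mul {p q t : ℝ} (hp : 0 < p) (hq : 0 < q)
    (h : |log p - log q| ≤ t) : |p - q| ≤ (exp t - 1) * q := by
  set d := log p - log q
  have hp_eq : p = q * exp d := by
    rw [exp_sub, exp_log hp, exp_log hq]; field_simp
  obtain ⟨hd_lo, hd_hi⟩ := abs_le.mp h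
  have hexp_d : |exp d - 1| ≤ exp t - 1 := by
    rw [abs_le]
    constructor
    · -- `1 - exp (-t) ≤ t ≤ exp t - 1`
      nlinarith [exp_le_exp.mpr hd_lo, add_one_le_exp (-t), add_one_le_exp t]
    · linarith [exp_le_exp.mpr hd_hi]
  calc |p - q| = |exp d - 1| * q := by
        rw [hp_eq, ← mul_sub_one, abs_mul, abs_of_pos hq, mul_comm]
    _ ≤ (exp t - 1) * q := by gcongr

lemma integral_mul_exp_le_exp_mul_integral_s4 {α : Type*} [MeasurableSpace α] {μ : Measure α}
    {w f g : α → ℝ} {δ : ℝ} (hw : ∀ᵐ a ∂μ, 0 ≤ w a)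
    (hf : Integrable (fun a => w a * exp (f a)) μ) (hg : Integrable (fun a => w a * exp (g a)) μ)
    (hfg : ∀ a, f a ≤ g a + δ) :
    ∫ a, w a * exp (f a) ∂μ ≤ exp δ * ∫ a, w a * exp (g a) ∂μ := by
  rw [← integral_const_mul]
  refine integral_mono_ae hf (hg.const_mul _) ?_
  filter_upwards [hw] with a ha
  calc w a * exp (f a) ≤ w a * exp (g a + δ) := by gcongr; exact hfg a
    _ = exp δ * (w a * exp (g a)) := by rw [exp_add]; ring

lemma abs_log_integral_mul_exp_sub_le {α : Type*} [MeasurableSpace α] {μ : Measure α}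
    {w f g : α → ℝ} {δ : ℝ} (hw : ∀ᵐ a ∂μ, 0 ≤ w a)
    (hf : Integrable (fun a => w a * exp (f a)) μ) (hg : Integrable (fun a => w a * exp (g a)) μ)
    (hf_pos : 0 < ∫ a, w a * exp (f a) ∂μ) (hg_pos : 0 < ∫ a, w a * exp (g a) ∂μ)
    (hfg : ∀ a, |f a - g a| ≤ δ) :
    |log (∫ a, w a * exp (f a) ∂μ) - log (∫ a, w a * exp (g a) ∂μ)| ≤ δ := by
  have log_le {u v : α → ℝ} (hu : Integrable (fun a => w a * exp (u a)) μ)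
      (hv : Integrable (fun a => w a * exp (v a)) μ) (hu_pos : 0 < ∫ a, w a * exp (u a) ∂μ)
      (huv : ∀ a, u a ≤ v a + δ) :
      log (∫ a, w a * exp (u a) ∂μ) ≤ δ + log (∫ a, w a * exp (v a) ∂μ) := by
    have hle := integral_mul_exp_le_exp_mul_integral_s4 hw hu hv huv
    have hv_pos : 0 < ∫ a, w a * exp (v a) ∂μ :=
      pos_of_mul_pos_right (hu_pos.trans_le hle) (exp_pos δ).le
    calc log (∫ a, w a * exp (u a) ∂μ) ≤ log (exp δ * ∫ a, w a * exp (v a) ∂μ) :=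
          log_le_log hu_pos hle
      _ = δ + log (∫ a, w a * exp (v a) ∂μ) := by
          rw [log_mul (exp_pos δ).ne' hv_pos.ne', log_exp]
  rw [abs_sub_le_iff]
  constructor
  · linarith [log_le hf hg hf_pos fun a => by linarith [(abs_le.mp (hfg a)).2]]
  · linarith [log_le hg hf hg_pos fun a => by linarith [(abs_le.mp (hfg a)).1]]

theorem stmt_4_general {α : Type*} [MeasurableSpace α] (μ : Measure α)
    (πb Q Q' : α → ℝ) (β ε : ℝ) (hβ : 0 < β)
    (hπb_pos : ∀ᵐ a ∂μ, 0 < πb a)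
    (hdiff : ∀ a, |Q a - Q' a| ≤ ε)
    (ZQ ZQ' : ℝ)
    (hZQ : ZQ = ∫ a, πb a * exp (β * Q a) ∂μ)
    (hZQ' : ZQ' = ∫ a, πb a * exp (β * Q' a) ∂μ)
    (hZQ_int : Integrable (fun a => πb a * exp (β * Q a)) μ)
    (hZQ'_int : Integrable (fun a => πb a * exp (β * Q' a)) μ)
    (hZQ_pos : 0 < ZQ) (hZQ'_pos : 0 < ZQ')
    (πQ πQ' : α → ℝ)
    (hπQ : ∀ a, πQ a = πb a * exp (β * Q a) / ZQ)
    (hπQ' : ∀ a, πQ' a = πb a * exp (β * Q' a) / ZQ') :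
    ∀ᵐ a ∂μ, |πQ a - πQ' a| ≤ (exp (2 * β * ε) - 1) * πQ' a := by
  have hβdiff (a : α) : |β * Q a - β * Q' a| ≤ β * ε := by
    rw [← mul_sub, abs_mul, abs_of_pos hβ]
    exact mul_le_mul_of_nonneg_left (hdiff a) hβ.le
  have hlogZ : |log ZQ - log ZQ'| ≤ β * ε := by
    rw [hZQ, hZQ']
    exact abs_log_integral_mul_exp_sub_le (hπb_pos.mono fun a ha => ha.le) hZQ_int hZQ'_int
      (hZQ ▸ hZQ_pos) (hZQ' ▸ hZQ'_pos) hβdiff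
  filter_upwards [hπb_pos] with a ha
  have log_tilt {x Z : ℝ} (hZ : 0 < Z) : log (πb a * exp x / Z) = log (πb a) + x - log Z := by
    rw [log_div (by positivity) hZ.ne', log_mul ha.ne' (exp_pos x).ne', log_exp]
  have hlog_ratio : log (πQ a) - log (πQ' a) = (β * Q a - β * Q' a) - (log ZQ - log ZQ') := by
    rw [hπQ, hπQ', log_tilt hZQ_pos, log_tilt hZQ'_pos]; ring
  refine abs_sub_le_exp_sub_one_mul (by rw [hπQ]; positivity) (by rw [hπQ']; positivity) ?_
  calc |log (πQ a) - log (πQ' a)| ≤ |β * Q a - β * Q' a| + |log ZQ - log ZQ'| :=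
        hlog_ratio ▸ abs_sub _ _
    _ ≤ 2 * β * ε := by linarith [hβdiff a]

/-- Under the hypotheses `‖Q − Q'‖_∞ ≤ ε` and `β > 0`, the pointwise
difference of the exponentially tilted densities satisfies
`|πQ(a) − πQ'(a)| ≤ (e^{2βε} − 1) πQ'(a)` for `μ`-almost every `a`. -/
theorem stmt_4 {α : Type*} [MeasurableSpace α] (μ : Measure α) [SigmaFinite μ]
    (πb Q Q' : α → ℝ) (β ε : ℝ) (hβ : 0 < β) (hε : 0 ≤ ε)
    (hπb_meas : Measurable πb) (hπb_pos : ∀ᵐ a ∂μ, 0 < πb a)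
    (hπb_prob : ∫ a, πb a ∂μ = 1)
    (hQ_meas : Measurable Q) (hQ'_meas : Measurable Q')
    (hQ_bdd : ∃ C, ∀ a, |Q a| ≤ C) (hQ'_bdd : ∃ C, ∀ a, |Q' a| ≤ C)
    (hdiff : ∀ a, |Q a - Q' a| ≤ ε)
    (ZQ ZQ' : ℝ)
    (hZQ : ZQ = ∫ a, πb a * exp (β * Q a) ∂μ)
    (hZQ' : ZQ' = ∫ a, πb a * exp (β * Q' a) ∂μ)
    (hZQ_int : Integrable (fun a => πb a * exp (β * Q a)) μ)
    (hZQ'_int : Integrable (fun a => πb a * exp (β * Q' a)) μ)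
    (hZQ_pos : 0 < ZQ) (hZQ'_pos : 0 < ZQ')
    (πQ πQ' : α → ℝ)
    (hπQ : ∀ a, πQ a = πb a * exp (β * Q a) / ZQ)
    (hπQ' : ∀ a, πQ' a = πb a * exp (β * Q' a) / ZQ') :
    ∀ᵐ a ∂μ, |πQ a - πQ' a| ≤ (exp (2 * β * ε) - 1) * πQ' a :=
  stmt_4_general μ πb Q Q' β ε hβ hπb_pos hdiff ZQ ZQ' hZQ hZQ' hZQ_int hZQ'_int hZQ_pos hZQ'_pos πQ
    πQ' hπQ hπQ'
end
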